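/- Let N = ⟨W, R, ⊩⟩ be a finite tree-like GL-model and let M = ⟨W', R', {S'_x : x ∈ W'}⟩ be the Veltman model obtained from N by the flat/natural end-point extension construction. Then the old worlds are modally definable in M by the closed formula ◇◇⊤, i.e. {x ∈ W' : M, x ⊩ ◇◇⊤} = W. -/
import Mathlib


/-- Formulas of the modal language with a single unary modality `□`.
Variable number `0` plays the role of the propositional variable `p`. -/
inductive GLForm : Type
  | bot : GLForm
  | var : ℕ → GLForm
  | imp : GLForm → GLForm → GLForm
  | box : GLForm → GLForm

namespace GLForm

/-- `¬A` abbreviates `A → ⊥`. -/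
def neg (A : GLForm) : GLForm := A.imp .bot

/-- `⊤` abbreviates `¬⊥`. -/
def top : GLForm := neg .bot

/-- `◇A` abbreviates `¬□¬A`. -/
def dia (A : GLForm) : GLForm := (A.neg.box).neg

/-- `A` contains at most the propositional variable `p` (i.e. variable number `0`). -/
def onlyP : GLForm → Prop
  | bot => True
  | var n => n = 0
  | imp A B => A.onlyP ∧ B.onlyP
  | box A => A.onlyP

end GLForm

/-- Formulas of the interpretability language: a unary modality `□` and a
binary modality `▷`. -/
inductive ILForm : Type
  | bot : ILForm
  | var : ℕ → ILForm
  | imp : ILForm → ILForm → ILForm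
  | box : ILForm → ILForm
  | rhd : ILForm → ILForm → ILForm

namespace ILForm

/-- `¬A` abbreviates `A → ⊥`. -/
def neg (A : ILForm) : ILForm := A.imp .bot

/-- `⊤` abbreviates `¬⊥`. -/
def top : ILForm := neg .bot

/-- `◇A` abbreviates `¬□¬A`. -/
def dia (A : ILForm) : ILForm := (A.neg.box).neg

end ILForm

/-- The translation of the variable `p`: the formula `◇◇⊤ → (⊤ ▷ ◇⊤)`. -/
def pDag : ILForm := (ILForm.top.dia.dia).imp (ILForm.top.rhd ILForm.top.dia)

/-- The translation `†` of one-variable `GL`-formulas into closed `IL`-formulas: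
`⊥† = ⊥`, `p† = ◇◇⊤ → (⊤ ▷ ◇⊤)`, `(A→B)† = A† → B†`, `(□A)† = □(◇◇⊤ → A†)`. -/
def dag : GLForm → ILForm
  | .bot => .bot
  | .var _ => pDag
  | .imp A B => (dag A).imp (dag B)
  | .box A => ((ILForm.top.dia.dia).imp (dag A)).box

/-- Kripke forcing for the language with `□`, over a frame `(W, R)` with
valuation `v` (variable number `0` is the variable `p`). -/
def KSat {W : Type} (R : W → W → Prop) (v : W → ℕ → Prop) : W → GLForm → Prop
  | x, .bot => False
  | x, .var n => v x n
  | x, .imp A B => KSat R v x A → KSat R v x B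
  | x, .box A => ∀ y, R x y → KSat R v y A

/-- Veltman forcing for the interpretability language, over `(W, R, S)` with
valuation `v`:  `x ⊩ □A` iff every `R`-successor of `x` forces `A`, and
`x ⊩ A ▷ B` iff every `R`-successor of `x` forcing `A` has an `S x`-successor
forcing `B`. -/
def ILSat {W : Type} (R : W → W → Prop) (S : W → W → W → Prop)
    (v : W → ℕ → Prop) : W → ILForm → Prop
  | x, .bot => False
  | x, .var n => v x n
  | x, .imp A B => ILSat R S v x A → ILSat R S v x B
  | x, .box A => ∀ y, R x y → ILSat R S v y A
  | x, .rhd A B => ∀ y, R x y → ILSat R S v y A → ∃ z, S x y z ∧ ILSat R S v z B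

/-- A `GL`-model: a Kripke model whose accessibility relation is transitive
and conversely well-founded. -/
structure GLModel where
  W : Type
  nonempty : Nonempty W
  R : W → W → Prop
  val : W → ℕ → Prop
  trans : Transitive R
  cwf : WellFounded (Function.swap R)

/-- A Veltman model (`IL`-model): `R` is transitive and conversely
well-founded, each `S x` is transitive, reflexive on the `R`-successors of
`x`, relates only `R`-successors of `x`, and contains `R` restricted to the
`R`-successors of `x`. -/
structure VeltmanModel where
  W : Type
  nonempty : Nonempty W
  R : W → W → Prop
  S : W → W → W → Prop
  val : W → ℕ → Prop
  R_trans : Transitive R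
  R_cwf : WellFounded (Function.swap R)
  S_trans : ∀ x, Transitive (S x)
  S_refl : ∀ x y, R x y → S x y y
  S_dom : ∀ x y z, S x y z → R x y ∧ R x z
  S_of_R : ∀ x y z, R x y → R y z → S x y z

/-- `e` is an end-point of the model: a world with no `R`-successors. -/
def GLModel.IsEndpoint (N : GLModel) (e : N.W) : Prop := ∀ y, ¬ N.R e y

/-- `N` is a finite tree-like `GL`-model: its set of worlds is finite, it has
a root below every other world, and its (transitive) accessibility relation is
the strict descendant relation of a tree, i.e. the predecessors of any world
are linearly ordered by `R`. -/
def GLModel.FiniteTreeLike (N : GLModel) : Prop :=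
  Finite N.W ∧ (∃ r : N.W, ∀ x, x = r ∨ N.R r x) ∧
    ∀ x y z : N.W, N.R x z → N.R y z → (N.R x y ∨ x = y ∨ N.R y x)

/-- The set `E` of end-points of `N`. -/
def Endpoints (N : GLModel) : Type := {e : N.W // N.IsEndpoint e}

/-- The extended set of worlds `W' = W ⊎ E♭ ⊎ E♮` (two fresh disjoint copies of
the end-points are added). -/
def Wext (N : GLModel) : Type := N.W ⊕ (Endpoints N ⊕ Endpoints N)

/-- The copy of an old world `x ∈ W` inside `W'`. -/
def old (N : GLModel) (x : N.W) : Wext N := Sum.inl x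

/-- The world `e♭` added above the end-point `e`. -/
def flatPt (N : GLModel) (e : Endpoints N) : Wext N := Sum.inr (Sum.inl e)

/-- The world `e♮` added above `e♭`. -/
def natPt (N : GLModel) (e : Endpoints N) : Wext N := Sum.inr (Sum.inr e)

/-- The relation `R ∪ {(e, e♭) : e ∈ E} ∪ {(e♭, e♮) : e ∈ E}` on `W'`,
whose transitive closure is the new accessibility relation `R'`. -/
def baseR (N : GLModel) : Wext N → Wext N → Prop :=
  fun a b =>
    match a, b with
    | Sum.inl x, Sum.inl y => N.R x y
    | Sum.inl x, Sum.inr (Sum.inl e) => x = e.val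
    | Sum.inr (Sum.inl e), Sum.inr (Sum.inr e') => e = e'
    | _, _ => False

/-- The new accessibility relation `R'`: the transitive closure of
`R ∪ {(e, e♭) : e ∈ E} ∪ {(e♭, e♮) : e ∈ E}`. -/
def Rext (N : GLModel) : Wext N → Wext N → Prop := Relation.TransGen (baseR N)

/-- The generating relation for `S'_x` when `x ∈ W` is an old world: the
restriction of `R'` to `{y : x R' y}`, together with the pairs `(e♮, e♭)` for
those end-points `e` with `N, x ⊩ p` and `x R⁼ e`. -/
def baseS (N : GLModel) (x : N.W) : Wext N → Wext N → Prop :=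
  fun y z =>
    (Rext N (old N x) y ∧ Rext N (old N x) z ∧ Rext N y z) ∨
    (∃ e : Endpoints N, y = natPt N e ∧ z = flatPt N e ∧
      N.val x 0 ∧ (N.R x e.val ∨ x = e.val))

/-- The family `S'` of the Veltman model obtained by the flat/natural
end-point extension construction: `S'_{e♭} = {(e♮, e♮)}`, `S'_{e♮} = ∅`, and
for `x ∈ W`, `S'_x` is the smallest transitive and reflexive relation on
`{y : x R' y}` containing the restriction of `R'` to `{y : x R' y}` and the
pairs `(e♮, e♭)` for every end-point `e` with `N, x ⊩ p` and `x R⁼ e`. -/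
def Sext (N : GLModel) : Wext N → Wext N → Wext N → Prop :=
  fun a y z =>
    match a with
    | Sum.inl x => Rext N (old N x) y ∧ Rext N (old N x) z ∧
        Relation.ReflTransGen (baseS N x) y z
    | Sum.inr (Sum.inl e) => y = natPt N e ∧ z = natPt N e
    | Sum.inr (Sum.inr _) => False

lemma baseR_nat (N : GLModel) (e : Endpoints N) (b : Wext N) :
    ¬ baseR N (natPt N e) b := by
  rcases b with x | (e' | e') <;> exact fun h => h

lemma baseR_flat (N : GLModel) (e : Endpoints N) (b : Wext N)
    (h : baseR N (flatPt N e) b) : b = natPt N e := by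
  rcases b with x | (e' | e')
  · exact h.elim
  · exact h.elim
  · exact (congrArg (natPt N) h).symm

lemma natPt_no_succ (N : GLModel) (e : Endpoints N) (w : Wext N) :
    ¬ Rext N (natPt N e) w := by
  intro h
  induction h with
  | single h => exact baseR_nat N e _ h
  | tail _ h ih => exact ih

lemma flatPt_succ (N : GLModel) (e : Endpoints N) (w : Wext N)
    (h : Rext N (flatPt N e) w) : w = natPt N e := by
  induction h with
  | single h => exact baseR_flat N e _ h
  | tail _ h ih => subst ih; exact (baseR_nat N e _ h).elim

lemma exists_endpoint (N : GLModel) (x : N.W) :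
    ∃ e : N.W, N.IsEndpoint e ∧ (x = e ∨ N.R x e) := by
  obtain ⟨m, hm, hmin⟩ := N.cwf.has_min {y | x = y ∨ N.R x y} ⟨x, Or.inl rfl⟩
  refine ⟨m, ?_, hm⟩
  intro y hy
  apply hmin y _ hy
  rcases hm with h | h
  · exact Or.inr (h ▸ hy)
  · exact Or.inr (N.trans h hy)

/-- Let `N = ⟨W, R, ⊩⟩` be a finite tree-like `GL`-model and let
`M = ⟨W', R', S'⟩` be the Veltman model obtained from `N` by the flat/natural
end-point extension construction (with an arbitrary valuation `v`, as only
closed formulas are evaluated).  Then the old worlds are modally definable in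
`M` by the closed formula `◇◇⊤`: `{x ∈ W' : M, x ⊩ ◇◇⊤} = W`. -/
theorem old_worlds_definable (N : GLModel) (hN : N.FiniteTreeLike)
    (v : Wext N → ℕ → Prop) :
    {x : Wext N | ILSat (Rext N) (Sext N) v x (ILForm.top.dia.dia)} =
      Set.range (old N) := by
  ext w
  simp only [Set.mem_setOf_eq, Set.mem_range]
  constructor
  · intro H
    rcases w with x | (e | e)
    · exact ⟨x, rfl⟩
    · exfalso
      apply H
      intro y hy hIL
      have hy' : y = natPt N e := flatPt_succ N e y hy
      subst hy'
      apply hIL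
      intro z hz _
      exact natPt_no_succ N e z hz
    · exfalso
      apply H
      intro y hy _
      exact natPt_no_succ N e y hy
  · rintro ⟨x, rfl⟩
    intro H
    obtain ⟨e, he, hxe⟩ := exists_endpoint N x
    have hR1 : Rext N (old N x) (flatPt N ⟨e, he⟩) := by
      rcases hxe with h | h
      · exact Relation.TransGen.single h
      · exact Relation.TransGen.tail (Relation.TransGen.single (show baseR N (old N x) (old N e) from h)) rfl
    apply H (flatPt N ⟨e, he⟩) hR1
    intro H2
    exact H2 (natPt N ⟨e, he⟩) (Relation.TransGen.single rfl) (fun h => h)
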